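/- In a Jordan algebra over a field of characteristic not 2, for all a, b: [T_{a^2}, T_{b^2}] = 2[T_a, T_{b^2 * a}]. -/

import Mathlib

/-! The Jordan identity says that `T_x` commutes with `T_{x²}`, i.e. `f x = 0` for the cubic map
`f x = [T_x, T_{x²}]`. Comparing `f (x + y)` with `f (x - y)` isolates the part of `f (x + y)` that is
linear in `y`, which is `2 [T_x, T_{xy}] + [T_y, T_{x²}]`; dividing by `2` and putting `y = b²`
gives the identity. -/

section LinearizedJordan

variable {R V : Type*} [CommRing R] [AddCommGroup V] [Module R V] (mul : V →ₗ[R] V →ₗ[R] V)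

theorem commute_mul_mul_self (comm : ∀ a b : V, mul a b = mul b a)
    (jordan : ∀ a b : V, mul a (mul b (mul a a)) = mul (mul a b) (mul a a)) (x : V) :
    Commute (mul x) (mul (mul x x)) := by
  ext y
  simp only [Module.End.mul_apply]
  rw [comm (mul x x) y, jordan, comm]

theorem mul_add_self_add (comm : ∀ a b : V, mul a b = mul b a) (x y : V) :
    mul (x + y) (x + y) = mul x x + 2 • mul x y + mul y y := by
  simp only [map_add, LinearMap.add_apply, comm y x]
  abel

theorem mul_sub_self_sub (comm : ∀ a b : V, mul a b = mul b a) (x y : V) :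
    mul (x - y) (x - y) = mul x x - 2 • mul x y + mul y y := by
  simp only [map_sub, LinearMap.sub_apply, comm y x]
  abel

theorem two_smul_linearized_jordan (comm : ∀ a b : V, mul a b = mul b a)
    (jordan : ∀ a b : V, mul a (mul b (mul a a)) = mul (mul a b) (mul a a)) (x y : V) :
    2 • (mul (mul x x) * mul y - mul y * mul (mul x x)) =
      2 • (2 • (mul x * mul (mul x y) - mul (mul x y) * mul x)) := by
  have hadd := (commute_mul_mul_self mul comm jordan (x + y)).eq
  have hsub := (commute_mul_mul_self mul comm jordan (x - y)).eq
  have hy := (commute_mul_mul_self mul comm jordan y).eq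
  rw [mul_add_self_add mul comm] at hadd
  rw [mul_sub_self_sub mul comm] at hsub
  simp only [map_add, map_sub, map_nsmul] at hadd hsub
  linear_combination (norm := noncomm_ring) hsub - hadd + 2 • hy

end LinearizedJordan

theorem stmt9 {F V : Type*} [Field F] (h2 : (2 : F) ≠ 0)
    [AddCommGroup V] [Module F V]
    (mul : V →ₗ[F] V →ₗ[F] V)
    (comm : ∀ a b : V, mul a b = mul b a)
    (jordan : ∀ a b : V, mul a (mul b (mul a a)) = mul (mul a b) (mul a a)) :
    ∀ a b : V, mul (mul a a) * mul (mul b b) - mul (mul b b) * mul (mul a a) = 2 • (mul a * mul (mul (mul b b) a) - mul (mul (mul b b) a) * mul a) := by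
  intro a b
  have h := two_smul_linearized_jordan mul comm jordan a (mul b b)
  rw [comm a (mul b b)] at h
  exact smul_right_injective (Module.End F V) h2 (by simpa only [ofNat_smul_eq_nsmul] using h)
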